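/- For positive integers m_1, m_2, m_3, let Θ(m_1,m_2,m_3) be the 3-uniform hypergraph obtained from two disjoint edges F = {u_1,u_2,u_3} and F' = {w_1,w_2,w_3} by joining u_i to w_i with a loose path of length m_i for i = 1,2,3, the three connecting paths being disjoint from each other and from F and F' except at their endpoints u_i, w_i. Then ρ(Θ(m_1,m_2,m_3)) > 2·(2+√5)^{1/3} for all m_1, m_2, m_3 ≥ 1. -/

import Mathlib

open Finset

/-- A hypergraph on vertex type `V`, given by its finite set of edges. -/
structure EdgeHypergraph (V : Type) [DecidableEq V] where
  edges : Finset (Finset V)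

namespace EdgeHypergraph

variable {V : Type} [DecidableEq V]

/-- The vertex set of `H`: all vertices lying in some edge. -/
def vertexSet (H : EdgeHypergraph V) : Finset V := H.edges.biUnion id

/-- `H` is `r`-uniform: every edge has exactly `r` vertices. -/
def IsUniform (H : EdgeHypergraph V) (r : ℕ) : Prop := ∀ e ∈ H.edges, e.card = r

/-- The degree of a vertex: the number of edges containing it. -/
def degree (H : EdgeHypergraph V) (v : V) : ℕ := (H.edges.filter fun e => v ∈ e).card

/-- The spectral radius of an `r`-uniform hypergraph `H`:
`ρ(H) = r! · max{ (∑_{e ∈ E} ∏_{v ∈ e} x_v) / (∑_v x_v ^ r) : x ≥ 0, x ≠ 0 }`. -/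
noncomputable def spectralRadius (H : EdgeHypergraph V) (r : ℕ) : ℝ :=
  (Nat.factorial r : ℝ) *
    sSup {t : ℝ | ∃ x : V → ℝ, (∀ v, 0 ≤ x v) ∧ (∃ v ∈ H.vertexSet, x v ≠ 0) ∧
      t = (∑ e ∈ H.edges, ∏ v ∈ e, x v) / (∑ v ∈ H.vertexSet, x v ^ r)}

/-- `v, e` form a walk `v 0, e 0, v 1, e 1, …, e (l-1), v l` in `H`. -/
def IsWalkSeq (H : EdgeHypergraph V) {l : ℕ} (v : Fin (l + 1) → V) (e : Fin l → Finset V) : Prop :=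
  ∀ i : Fin l, e i ∈ H.edges ∧ v i.castSucc ∈ e i ∧ v i.succ ∈ e i

/-- `H` is connected: every two vertices are joined by a walk. -/
def Connected (H : EdgeHypergraph V) : Prop :=
  ∀ u ∈ H.vertexSet, ∀ w ∈ H.vertexSet,
    ∃ (l : ℕ) (v : Fin (l + 1) → V) (e : Fin l → Finset V),
      H.IsWalkSeq v e ∧ v 0 = u ∧ v (Fin.last l) = w

/-- The cyclic successor on `Fin l`. -/
def cyc {l : ℕ} (i : Fin l) : Fin l := ⟨((i : ℕ) + 1) % l, Nat.mod_lt _ i.pos⟩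

/-- `v, e` form a cycle `v 0, e 0, v 1, e 1, …, e (l-1), v 0` of length `l` in `H`,
with all vertices and all edges distinct. -/
def IsCycleSeq (H : EdgeHypergraph V) {l : ℕ} (v : Fin l → V) (e : Fin l → Finset V) : Prop :=
  Function.Injective v ∧ Function.Injective e ∧
    ∀ i : Fin l, e i ∈ H.edges ∧ v i ∈ e i ∧ v (cyc i) ∈ e i

/-- `H` contains a cycle. -/
def HasCycle (H : EdgeHypergraph V) : Prop :=
  ∃ l : ℕ, 2 ≤ l ∧ ∃ (v : Fin l → V) (e : Fin l → Finset V), H.IsCycleSeq v e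

/-- A hypertree: connected and acyclic. -/
def IsHypertree (H : EdgeHypergraph V) : Prop := H.Connected ∧ ¬H.HasCycle

/-- `H` is irreducible: some edge has all of its vertices of degree at least `2`. -/
def Irreducible (H : EdgeHypergraph V) : Prop := ∃ e ∈ H.edges, ∀ v ∈ e, 2 ≤ H.degree v

/-- `g` encodes a loose path: consecutive edges meet in exactly one vertex and
non-consecutive edges are disjoint. -/
def IsLoosePathSeq {m : ℕ} (g : Fin m → Finset V) : Prop :=
  (∀ i j : Fin m, (i : ℕ) + 1 = (j : ℕ) → (g i ∩ g j).card = 1) ∧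
    ∀ i j : Fin m, (i : ℕ) + 1 < (j : ℕ) → g i ∩ g j = ∅

/-- The set of vertices covered by a family of edges. -/
def pathVerts {m : ℕ} (g : Fin m → Finset V) : Finset V := Finset.univ.biUnion g

/-- A loose path of edges of `H`, attached to the edge `e0` at the vertex `a`:
`a` is an end vertex of the first edge of the path, and the path meets `e0` only in `a`. -/
def IsAttachedPath (H : EdgeHypergraph V) (e0 : Finset V) (a : V) {m : ℕ}
    (g : Fin m → Finset V) : Prop :=
  IsLoosePathSeq g ∧ (∀ j, g j ∈ H.edges) ∧ (∀ j, g j ≠ e0) ∧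
    pathVerts g ∩ e0 = {a} ∧ ∀ j : Fin m, a ∈ g j ↔ (j : ℕ) = 0

/-- A path in `H`: a walk with all vertices and all edges distinct. -/
def IsPathSeq (H : EdgeHypergraph V) {l : ℕ} (v : Fin (l + 1) → V) (e : Fin l → Finset V) : Prop :=
  H.IsWalkSeq v e ∧ Function.Injective v ∧ Function.Injective e

/-- A loose path of edges of `H` joining `a ∈ F` to `b ∈ F'`: `a` is an end vertex of
its first edge, `b` an end vertex of its last edge, and the path meets `F` only in `a`
and `F'` only in `b`. -/
def IsJoiningPath (H : EdgeHypergraph V) (F F' : Finset V) (a b : V) {m : ℕ}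
    (g : Fin m → Finset V) : Prop :=
  IsLoosePathSeq g ∧ (∀ j, g j ∈ H.edges) ∧ (∀ j, g j ≠ F ∧ g j ≠ F') ∧
    pathVerts g ∩ F = {a} ∧ pathVerts g ∩ F' = {b} ∧
    (∀ j : Fin m, a ∈ g j ↔ (j : ℕ) = 0) ∧ ∀ j : Fin m, b ∈ g j ↔ (j : ℕ) + 1 = m

/-- `Θ(m₁, m₂, m₃)`: two disjoint 3-edges `{u 0, u 1, u 2}` and `{w 0, w 1, w 2}` with
`u i` joined to `w i` by a loose path of length `m i`, the three connecting paths being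
pairwise disjoint. -/
def IsTheta (H : EdgeHypergraph V) (m₁ m₂ m₃ : ℕ) : Prop :=
  H.IsUniform 3 ∧
    ∃ (u w : Fin 3 → V) (g₁ : Fin m₁ → Finset V) (g₂ : Fin m₂ → Finset V)
      (g₃ : Fin m₃ → Finset V),
      Function.Injective u ∧ Function.Injective w ∧
      Finset.univ.image u ∈ H.edges ∧ Finset.univ.image w ∈ H.edges ∧
      Finset.univ.image u ∩ Finset.univ.image w = ∅ ∧
      H.IsJoiningPath (Finset.univ.image u) (Finset.univ.image w) (u 0) (w 0) g₁ ∧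
      H.IsJoiningPath (Finset.univ.image u) (Finset.univ.image w) (u 1) (w 1) g₂ ∧
      H.IsJoiningPath (Finset.univ.image u) (Finset.univ.image w) (u 2) (w 2) g₃ ∧
      pathVerts g₁ ∩ pathVerts g₂ = ∅ ∧ pathVerts g₁ ∩ pathVerts g₃ = ∅ ∧
      pathVerts g₂ ∩ pathVerts g₃ = ∅ ∧
      ∀ f ∈ H.edges, f = Finset.univ.image u ∨ f = Finset.univ.image w ∨
        (∃ t, g₁ t = f) ∨ (∃ t, g₂ t = f) ∨ ∃ t, g₃ t = f

end EdgeHypergraph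

open EdgeHypergraph

open Finset
open scoped Classical


section Scalar
variable {σ : ℝ}

/-- the profile sequence -/
noncomputable def thf (σ : ℝ) (m j : ℕ) : ℝ := σ ^ j + σ ^ (m - j)

lemma thf_pos (hσ : 0 < σ) (m j : ℕ) : 0 < thf σ m j := by
  have := pow_pos hσ j; have := pow_pos hσ (m - j); unfold thf; linarith

lemma thf_rec (hσ4 : σ^4 = σ^2 + 1) {m j : ℕ} (h : j + 2 ≤ m) :
    thf σ m j + thf σ m (j+2) = σ^3 * thf σ m (j+1) := by
  obtain ⟨k, rfl⟩ := Nat.exists_eq_add_of_le h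
  unfold thf
  have e1 : j + 2 + k - j = k + 2 := by omega
  have e2 : j + 2 + k - (j+1) = k + 1 := by omega
  have e3 : j + 2 + k - (j+2) = k := by omega
  rw [e1, e2, e3]
  linear_combination (-(σ^j + σ^k)) * hσ4

lemma thf_last {n : ℕ} : thf σ (n+1) (n+1) = thf σ (n+1) 0 := by
  unfold thf; rw [Nat.sub_self, Nat.sub_zero]; ring

lemma thf_pen {n : ℕ} : thf σ (n+1) n = thf σ (n+1) 1 := by
  unfold thf
  have e1 : n + 1 - n = 1 := by omega
  have e2 : n + 1 - 1 = n := by omega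
  rw [e1, e2]; ring

/-- key summation identity -/
lemma thf_key (hσ4 : σ^4 = σ^2 + 1) (n : ℕ) :
    2 * (∑ j ∈ range (n+1), thf σ (n+1) j * thf σ (n+1) (j+1)) =
      σ^3 * (∑ j ∈ range n, thf σ (n+1) (j+1)^2) + 2 * (thf σ (n+1) 0 * thf σ (n+1) 1) := by
  set f := thf σ (n+1) with hf
  have h1 : ∑ j ∈ range (n+1), f j * f (j+1)
      = (∑ j ∈ range n, f j * f (j+1)) + f n * f (n+1) := Finset.sum_range_succ _ n
  have h2 : ∑ j ∈ range (n+1), f j * f (j+1)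
      = (∑ j ∈ range n, f (j+1) * f (j+2)) + f 0 * f 1 := Finset.sum_range_succ' _ n
  have h3 : σ^3 * (∑ j ∈ range n, f (j+1)^2)
      = (∑ j ∈ range n, f j * f (j+1)) + (∑ j ∈ range n, f (j+1) * f (j+2)) := by
    rw [Finset.mul_sum, ← Finset.sum_add_distrib]
    refine Finset.sum_congr rfl fun j hj => ?_
    have hj' : j + 2 ≤ n + 1 := by have := Finset.mem_range.mp hj; omega
    have h := thf_rec hσ4 hj'
    rw [← hf] at h
    linear_combination (-(f (j+1))) * h
  have h4 : f (n+1) = f 0 := thf_last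
  have h5 : f n = f 1 := thf_pen
  rw [h4, h5] at h1
  have hc : f 1 * f 0 = f 0 * f 1 := mul_comm _ _
  rw [h3]
  linarith [h1, h2, hc]

end Scalar



section Vals
variable {σ : ℝ}

noncomputable def thP (σ : ℝ) (m j : ℕ) : ℝ := (thf σ m j / thf σ m 0) ^ ((2:ℝ)/3)
noncomputable def thQ (σ : ℝ) (m j : ℕ) : ℝ :=
  ((thf σ m j * thf σ m (j+1)) / (thf σ m 0)^2) ^ ((1:ℝ)/3) / σ

lemma thf_pos' (hσ : 0 < σ) (m j : ℕ) : 0 < thf σ m j := by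
  have := pow_pos hσ j; have := pow_pos hσ (m - j); unfold thf; linarith

lemma thP_nonneg (hσ : 0 < σ) (m j : ℕ) : 0 ≤ thP σ m j := Real.rpow_nonneg
  (le_of_lt (div_pos (thf_pos' hσ m j) (thf_pos' hσ m 0))) _

lemma thQ_nonneg (hσ : 0 < σ) (m j : ℕ) : 0 ≤ thQ σ m j := by
  apply div_nonneg _ hσ.le
  exact Real.rpow_nonneg (le_of_lt (div_pos (mul_pos (thf_pos' hσ m j) (thf_pos' hσ m (j+1)))
    (pow_pos (thf_pos' hσ m 0) 2))) _

lemma thP_zero (hσ : 0 < σ) (m : ℕ) : thP σ m 0 = 1 := by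
  unfold thP
  rw [div_self (ne_of_gt (thf_pos' hσ m 0)), Real.one_rpow]

lemma thP_last (hσ : 0 < σ) (n : ℕ) : thP σ (n+1) (n+1) = 1 := by
  unfold thP
  have : thf σ (n+1) (n+1) = thf σ (n+1) 0 := by
    unfold thf; rw [Nat.sub_self, Nat.sub_zero]; ring
  rw [this, div_self (ne_of_gt (thf_pos' hσ (n+1) 0)), Real.one_rpow]

lemma thP_cube (hσ : 0 < σ) (m j : ℕ) : thP σ m j ^ 3 = (thf σ m j)^2 / (thf σ m 0)^2 := by
  unfold thP
  have hr : (0:ℝ) ≤ thf σ m j / thf σ m 0 :=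
    le_of_lt (div_pos (thf_pos' hσ m j) (thf_pos' hσ m 0))
  calc ((thf σ m j / thf σ m 0) ^ ((2:ℝ)/3)) ^ (3:ℕ)
      = ((thf σ m j / thf σ m 0) ^ ((2:ℝ)/3)) ^ ((3:ℕ):ℝ) := (Real.rpow_natCast _ 3).symm
    _ = (thf σ m j / thf σ m 0) ^ (((2:ℝ)/3) * ((3:ℕ):ℝ)) := by rw [← Real.rpow_mul hr]
    _ = (thf σ m j / thf σ m 0) ^ ((2:ℕ):ℝ) := by norm_num
    _ = (thf σ m j / thf σ m 0) ^ (2:ℕ) := Real.rpow_natCast _ 2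
    _ = (thf σ m j)^2 / (thf σ m 0)^2 := div_pow _ _ _

lemma thQ_cube (hσ : 0 < σ) (m j : ℕ) : thQ σ m j ^ 3 =
    (thf σ m j * thf σ m (j+1)) / (thf σ m 0)^2 / σ^3 := by
  unfold thQ
  have hz : (0:ℝ) ≤ (thf σ m j * thf σ m (j+1)) / (thf σ m 0)^2 :=
    le_of_lt (div_pos (mul_pos (thf_pos' hσ m j) (thf_pos' hσ m (j+1)))
      (pow_pos (thf_pos' hσ m 0) 2))
  rw [div_pow]
  congr 1
  calc (((thf σ m j * thf σ m (j+1)) / (thf σ m 0)^2) ^ ((1:ℝ)/3)) ^ (3:ℕ)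
      = (((thf σ m j * thf σ m (j+1)) / (thf σ m 0)^2) ^ ((1:ℝ)/3)) ^ ((3:ℕ):ℝ) :=
        (Real.rpow_natCast _ 3).symm
    _ = ((thf σ m j * thf σ m (j+1)) / (thf σ m 0)^2) ^ (((1:ℝ)/3) * ((3:ℕ):ℝ)) := by
        rw [← Real.rpow_mul hz]
    _ = ((thf σ m j * thf σ m (j+1)) / (thf σ m 0)^2) ^ (1:ℝ) := by norm_num
    _ = (thf σ m j * thf σ m (j+1)) / (thf σ m 0)^2 := Real.rpow_one _

lemma thPQ_prod (hσ : 0 < σ) (m j : ℕ) : thP σ m j * thQ σ m j * thP σ m (j+1) =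
    (thf σ m j * thf σ m (j+1)) / (thf σ m 0)^2 / σ := by
  have h0 := thf_pos' hσ m 0
  have hj := thf_pos' hσ m j
  have hj1 := thf_pos' hσ m (j+1)
  have hz : (0:ℝ) ≤ (thf σ m j * thf σ m (j+1)) / (thf σ m 0)^2 :=
    le_of_lt (div_pos (mul_pos hj hj1) (pow_pos h0 2))
  have hmul : (thf σ m j / thf σ m 0) ^ ((2:ℝ)/3) * (thf σ m (j+1) / thf σ m 0) ^ ((2:ℝ)/3)
      = ((thf σ m j * thf σ m (j+1)) / (thf σ m 0)^2) ^ ((2:ℝ)/3) := by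
    rw [← Real.mul_rpow (le_of_lt (div_pos hj h0)) (le_of_lt (div_pos hj1 h0))]
    congr 1
    field_simp
  have : thP σ m j * thQ σ m j * thP σ m (j+1)
      = ((thf σ m j / thf σ m 0) ^ ((2:ℝ)/3) * (thf σ m (j+1) / thf σ m 0) ^ ((2:ℝ)/3))
        * ((thf σ m j * thf σ m (j+1)) / (thf σ m 0)^2) ^ ((1:ℝ)/3) / σ := by
    unfold thP thQ; ring
  rw [this, hmul, ← Real.rpow_add (lt_of_le_of_ne hz (by
    exact fun h => absurd h.symm (ne_of_gt (div_pos (mul_pos hj hj1) (pow_pos h0 2)))))]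
  norm_num

end Vals

lemma alg (a b K S σ : ℝ) (ha : a ≠ 0) (hσ0 : σ ≠ 0) (hK : 2*K = σ^3*S + 2*(a*b)) :
    3*(K/(a^2*σ)) - σ^2*(K/(a^2*σ^3) + S/a^2) = 2*b/(σ*a) := by
  field_simp
  linear_combination hK

lemma path_scalar {σ : ℝ} (hσ1 : 1 < σ) (hσ4 : σ^4 = σ^2 + 1) (n : ℕ) :
    2*(σ^2 - 1) <
      3 * (∑ j ∈ range (n+1), thP σ (n+1) j * thQ σ (n+1) j * thP σ (n+1) (j+1))
      - σ^2 * ((∑ j ∈ range (n+1), thQ σ (n+1) j ^ 3)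
        + ∑ j ∈ range n, thP σ (n+1) (j+1) ^ 3) := by
  have hσ : 0 < σ := lt_trans one_pos hσ1
  have hσ0 : σ ≠ 0 := ne_of_gt hσ
  have h0 := thf_pos' hσ (n+1) 0
  have h0' : thf σ (n+1) 0 ≠ 0 := ne_of_gt h0
  have h1 := thf_pos' hσ (n+1) 1
  set K := ∑ j ∈ range (n+1), thf σ (n+1) j * thf σ (n+1) (j+1) with hKdef
  set S := ∑ j ∈ range n, thf σ (n+1) (j+1)^2 with hSdef
  have hA : ∑ j ∈ range (n+1), thP σ (n+1) j * thQ σ (n+1) j * thP σ (n+1) (j+1)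
      = K / ((thf σ (n+1) 0)^2 * σ) := by
    rw [hKdef, Finset.sum_div]
    exact Finset.sum_congr rfl fun j _ => by rw [thPQ_prod hσ, div_div]
  have hB : ∑ j ∈ range (n+1), thQ σ (n+1) j ^ 3 = K / ((thf σ (n+1) 0)^2 * σ^3) := by
    rw [hKdef, Finset.sum_div]
    exact Finset.sum_congr rfl fun j _ => by rw [thQ_cube hσ, div_div]
  have hC : ∑ j ∈ range n, thP σ (n+1) (j+1) ^ 3 = S / (thf σ (n+1) 0)^2 := by
    rw [hSdef, Finset.sum_div]
    exact Finset.sum_congr rfl fun j _ => by rw [thP_cube hσ]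
  have hK := thf_key hσ4 n
  rw [← hKdef, ← hSdef] at hK
  rw [hA, hB, hC]
  have key : 3 * (K / ((thf σ (n+1) 0)^2 * σ))
      - σ^2 * (K / ((thf σ (n+1) 0)^2 * σ^3) + S / (thf σ (n+1) 0)^2)
      = 2 * thf σ (n+1) 1 / (σ * thf σ (n+1) 0) := by
    have := alg (thf σ (n+1) 0) (thf σ (n+1) 1) K S σ h0' hσ0 hK
    exact this
  rw [key]
  rw [lt_div_iff₀ (by positivity)]
  have hσ2 : σ^2*(σ^2-1) = 1 := by linear_combination hσ4
  have hf0 : thf σ (n+1) 0 = 1 + σ^(n+1) := by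
    unfold thf; rw [pow_zero, Nat.sub_zero]
  have hf1 : thf σ (n+1) 1 = σ + σ^n := by
    unfold thf; rw [pow_one, show n+1-1 = n from rfl]
  rw [hf0, hf1]
  have hmul : (0:ℝ) < σ^2 := by positivity
  rw [show (2*(σ^2-1)) * (σ * (1+σ^(n+1))) = (σ^2-1)*(2*σ*(1+σ^(n+1))) by ring]
  have goal2 : σ^2 * ((σ^2-1)*(2*σ*(1+σ^(n+1)))) < σ^2 * (2*(σ+σ^n)) := by
    have e1 : σ^2 * ((σ^2-1)*(2*σ*(1+σ^(n+1)))) = 2*σ + 2*σ*σ^(n+1) := by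
      linear_combination (2*σ*(1+σ^(n+1))) * hσ2
    have e2 : σ^2 * (2*(σ+σ^n)) = 2*σ^3 + 2*σ*σ^(n+1) := by ring
    rw [e1, e2]
    nlinarith [hσ1, hσ]
  linarith [(mul_lt_mul_iff_right₀ hmul).mp goal2]


open scoped Classical in
noncomputable def thSum {V : Type} [DecidableEq V] (g' : ℕ → Finset V) (m : ℕ) (a b : V)
    (P Q : ℕ → ℝ) (v : V) : ℝ :=
  (∑ j ∈ Finset.range (m-1), if v ∈ g' j ∩ g' (j+1) then P (j+1) else 0)
  + ∑ j ∈ Finset.range m,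
      if (v ∈ g' j ∧ (∀ k, k ≠ j → v ∉ g' k) ∧ v ≠ a ∧ v ≠ b) then Q j else 0

structure PathHyp (V : Type) [DecidableEq V] (F F' : Finset V) (a b : V) (m : ℕ)
    (g' : ℕ → Finset V) : Prop where
  hm : 0 < m
  hcard : ∀ j < m, (g' j).card = 3
  hcons : ∀ j, j+1 < m → (g' j ∩ g' (j+1)).card = 1
  hfar : ∀ j k, k < m → j+1 < k → g' j ∩ g' k = ∅
  hnil : ∀ j, m ≤ j → g' j = ∅
  ha : ∀ j, a ∈ g' j ↔ j = 0
  hb : ∀ j, b ∈ g' j ↔ j+1 = m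
  hab : a ≠ b
  haF : a ∈ F
  hbF' : b ∈ F'
  hPF : ∀ v k, v ∈ g' k → v ∈ F → v = a
  hPF' : ∀ v k, v ∈ g' k → v ∈ F' → v = b

namespace PathHyp

variable {V : Type} [DecidableEq V] {F F' : Finset V} {a b : V} {m : ℕ} {g' : ℕ → Finset V}

lemma mem_lt (h : PathHyp V F F' a b m g') {v : V} {k : ℕ} (hv : v ∈ g' k) : k < m := by
  by_contra hc
  rw [h.hnil k (not_lt.mp hc)] at hv
  exact absurd hv (Finset.notMem_empty v)

lemma mem_two (h : PathHyp V F F' a b m g') {v : V} {c k : ℕ}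
    (hc : v ∈ g' c) (hc1 : v ∈ g' (c+1)) (hk : v ∈ g' k) : k = c ∨ k = c+1 := by
  by_contra hcon
  push_neg at hcon
  obtain ⟨h1, h2⟩ := hcon
  have hkm := h.mem_lt hk
  have hc1m := h.mem_lt hc1
  rcases lt_trichotomy k c with hlt | heq | hgt
  · have : g' k ∩ g' (c+1) = ∅ := h.hfar k (c+1) hc1m (by omega)
    exact absurd (Finset.mem_inter.mpr ⟨hk, hc1⟩) (by rw [this]; exact Finset.notMem_empty v)
  · exact h1 heq
  · have hgt2 : c + 1 < k := by omega
    have : g' c ∩ g' k = ∅ := h.hfar c k hkm hgt2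
    exact absurd (Finset.mem_inter.mpr ⟨hc, hk⟩) (by rw [this]; exact Finset.notMem_empty v)

/-- the three distinct vertices of edge `j` -/
lemma triple (h : PathHyp V F F' a b m g') (j : ℕ) (hj : j < m) :
    ∃ z₁ z₂ z : V, (z₁ ≠ z₂ ∧ z₁ ≠ z ∧ z₂ ≠ z) ∧
      g' j = insert z₁ (insert z₂ {z}) ∧
      (j = 0 → z₁ = a) ∧
      (0 < j → z₁ ∈ g' (j-1) ∧ g' (j-1) ∩ g' j = {z₁}) ∧
      (j+1 = m → z₂ = b) ∧
      (j+1 < m → z₂ ∈ g' (j+1) ∧ g' j ∩ g' (j+1) = {z₂}) ∧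
      (z ∈ g' j ∧ (∀ k, k ≠ j → z ∉ g' k) ∧ z ≠ a ∧ z ≠ b) ∧
      (∀ v, v ∈ g' j → (∀ k, k ≠ j → v ∉ g' k) → v ≠ a → v ≠ b → v = z) := by
  -- z₁
  have hz₁ : ∃ z₁ : V, z₁ ∈ g' j ∧ (j = 0 → z₁ = a) ∧
      (0 < j → z₁ ∈ g' (j-1) ∧ g' (j-1) ∩ g' j = {z₁}) := by
    rcases Nat.eq_zero_or_pos j with h0 | hpos
    · subst h0
      exact ⟨a, (h.ha 0).mpr rfl, fun _ => rfl, fun hc => absurd hc (lt_irrefl 0)⟩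
    · have hcons' : (g' (j-1) ∩ g' ((j-1)+1)).card = 1 := h.hcons (j-1) (by omega)
      rw [show j - 1 + 1 = j by omega] at hcons'
      obtain ⟨z₁, hz₁⟩ := Finset.card_eq_one.mp hcons'
      have hmem : z₁ ∈ g' (j-1) ∩ g' j := by rw [hz₁]; exact Finset.mem_singleton_self z₁
      exact ⟨z₁, (Finset.mem_inter.mp hmem).2, fun hc => by omega,
        fun _ => ⟨(Finset.mem_inter.mp hmem).1, hz₁⟩⟩
  obtain ⟨z₁, hz₁g, hz₁0, hz₁p⟩ := hz₁
  have hz₂ : ∃ z₂ : V, z₂ ∈ g' j ∧ (j+1 = m → z₂ = b) ∧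
      (j+1 < m → z₂ ∈ g' (j+1) ∧ g' j ∩ g' (j+1) = {z₂}) := by
    rcases eq_or_lt_of_le (Nat.succ_le_of_lt hj) with hm' | hlt
    · exact ⟨b, (h.hb j).mpr hm', fun _ => rfl, fun hc => by omega⟩
    · obtain ⟨z₂, hz₂⟩ := Finset.card_eq_one.mp (h.hcons j hlt)
      have hmem : z₂ ∈ g' j ∩ g' (j+1) := by rw [hz₂]; exact Finset.mem_singleton_self z₂
      exact ⟨z₂, (Finset.mem_inter.mp hmem).1, fun hc => by omega,
        fun _ => ⟨(Finset.mem_inter.mp hmem).2, hz₂⟩⟩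
  obtain ⟨z₂, hz₂g, hz₂m, hz₂p⟩ := hz₂
  -- z₁ ≠ z₂
  have hne12 : z₁ ≠ z₂ := by
    rcases Nat.eq_zero_or_pos j with h0 | hpos
    · subst h0
      rcases eq_or_lt_of_le (Nat.succ_le_of_lt hj) with hm' | hlt
      · rw [hz₁0 rfl, hz₂m (by omega)]; exact h.hab
      · intro hc
        have := (hz₂p hlt).1
        rw [← hc, hz₁0 rfl] at this
        exact absurd ((h.ha 1).mp this) one_ne_zero
    · rcases eq_or_lt_of_le (Nat.succ_le_of_lt hj) with hm' | hlt
      · intro hc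
        have := (hz₁p hpos).1
        rw [hc, hz₂m (by omega)] at this
        have := (h.hb (j-1)).mp this
        omega
      · intro hc
        have h1 := (hz₁p hpos).1
        have h2 := (hz₂p hlt).1
        rw [hc] at h1
        have : g' (j-1) ∩ g' (j+1) = ∅ := h.hfar (j-1) (j+1) hlt (by omega)
        exact absurd (Finset.mem_inter.mpr ⟨h1, h2⟩)
          (by rw [this]; exact Finset.notMem_empty _)
  -- the third vertex z
  have hsub : {z₁, z₂} ⊆ g' j := by
    intro v hv
    rcases Finset.mem_insert.mp hv with rfl | hv
    · exact hz₁g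
    · rw [Finset.mem_singleton.mp hv]; exact hz₂g
  have hcard2 : ({z₁, z₂} : Finset V).card = 2 := Finset.card_pair hne12
  have hcards : ((g' j) \ {z₁, z₂}).card = 1 := by
    rw [Finset.card_sdiff_of_subset hsub, hcard2, h.hcard j hj]
  obtain ⟨z, hz⟩ := Finset.card_eq_one.mp hcards
  have hzmem : z ∈ g' j ∧ z ∉ ({z₁, z₂} : Finset V) := by
    have : z ∈ (g' j) \ {z₁, z₂} := by rw [hz]; exact Finset.mem_singleton_self z
    exact Finset.mem_sdiff.mp this
  have hz1 : z₁ ≠ z := fun hc => hzmem.2 (by rw [← hc]; exact Finset.mem_insert_self _ _)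
  have hz2 : z₂ ≠ z := fun hc => hzmem.2 (by rw [← hc]; simp)
  -- the edge is exactly the triple
  have hset : g' j = insert z₁ (insert z₂ {z}) := by
    apply (Finset.eq_of_subset_of_card_le _ _).symm
    · intro v hv
      rcases Finset.mem_insert.mp hv with rfl | hv
      · exact hz₁g
      rcases Finset.mem_insert.mp hv with rfl | hv
      · exact hz₂g
      · rw [Finset.mem_singleton.mp hv]; exact hzmem.1
    · rw [h.hcard j hj]
      have hc3 : (insert z₁ (insert z₂ ({z} : Finset V))).card = 3 := by
        rw [Finset.card_insert_of_notMem (by simp [hne12, hz1]),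
          Finset.card_insert_of_notMem (by simp [hz2]), Finset.card_singleton]
      omega
  -- z is only in edge j
  have hzonly : ∀ k, k ≠ j → z ∉ g' k := by
    intro k hk hzk
    have hkm := h.mem_lt hzk
    rcases lt_trichotomy k j with hlt | heq | hgt
    · rcases eq_or_lt_of_le (Nat.succ_le_of_lt hlt) with he | hl
      · -- k+1 = j
        have hjpos : 0 < j := by omega
        have := (hz₁p hjpos).2
        have hzin : z ∈ g' (j-1) ∩ g' j := by
          rw [show j - 1 = k by omega]
          exact Finset.mem_inter.mpr ⟨hzk, hzmem.1⟩
        rw [this] at hzin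
        exact hz1 (Finset.mem_singleton.mp hzin).symm
      · have : g' k ∩ g' j = ∅ := h.hfar k j hj hl
        exact absurd (Finset.mem_inter.mpr ⟨hzk, hzmem.1⟩)
          (by rw [this]; exact Finset.notMem_empty _)
    · exact hk heq
    · rcases eq_or_lt_of_le (Nat.succ_le_of_lt hgt) with he | hl
      · -- k = j+1
        have hlt' : j + 1 < m := by omega
        have hsing := (hz₂p hlt').2
        have hzin : z ∈ g' j ∩ g' (j+1) := by
          refine Finset.mem_inter.mpr ⟨hzmem.1, ?_⟩
          rw [show j + 1 = k from he]
          exact hzk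
        rw [hsing] at hzin
        exact hz2 (Finset.mem_singleton.mp hzin).symm
      · have : g' j ∩ g' k = ∅ := h.hfar j k hkm hl
        exact absurd (Finset.mem_inter.mpr ⟨hzmem.1, hzk⟩)
          (by rw [this]; exact Finset.notMem_empty _)
  have hzna : z ≠ a := by
    intro hc
    have hj0 : j = 0 := (h.ha j).mp (hc ▸ hzmem.1)
    exact hz1 ((hz₁0 hj0).trans hc.symm)
  have hznb : z ≠ b := by
    intro hc
    have hjm : j + 1 = m := (h.hb j).mp (hc ▸ hzmem.1)
    exact hz2 ((hz₂m hjm).trans hc.symm)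
  have huniq : ∀ v, v ∈ g' j → (∀ k, k ≠ j → v ∉ g' k) → v ≠ a → v ≠ b → v = z := by
    intro v hv honly hva hvb
    rw [hset] at hv
    rcases Finset.mem_insert.mp hv with rfl | hv
    · rcases Nat.eq_zero_or_pos j with h0 | hpos
      · exact absurd (hz₁0 h0) hva
      · exact absurd (hz₁p hpos).1 (honly (j-1) (by omega))
    rcases Finset.mem_insert.mp hv with rfl | hv
    · rcases eq_or_lt_of_le (Nat.succ_le_of_lt hj) with hm' | hlt
      · exact absurd (hz₂m hm') hvb
      · exact absurd (hz₂p hlt).1 (honly (j+1) (by omega))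
    · exact Finset.mem_singleton.mp hv
  exact ⟨z₁, z₂, z, ⟨hne12, hz1, hz2⟩, hset, hz₁0, hz₁p, hz₂m, hz₂p,
    ⟨hzmem.1, hzonly, hzna, hznb⟩, huniq⟩

end PathHyp

namespace PathHyp
variable {V : Type} [DecidableEq V] {F F' : Finset V} {a b : V} {m : ℕ} {g' : ℕ → Finset V}

lemma sum_evalP (h : PathHyp V F F' a b m g') {v : V} {c : ℕ}
    (hc : v ∈ g' c) (hc1 : v ∈ g' (c+1)) (P Q : ℕ → ℝ) :
    thSum g' m a b P Q v = P (c+1) := by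
  have hc1m : c + 1 < m := h.mem_lt hc1
  unfold thSum
  have hQ0 : (∑ j ∈ Finset.range m,
      if (v ∈ g' j ∧ (∀ k, k ≠ j → v ∉ g' k) ∧ v ≠ a ∧ v ≠ b) then Q j else 0) = 0 := by
    apply Finset.sum_eq_zero
    intro j hj
    rw [if_neg]
    rintro ⟨hvj, honly, -, -⟩
    rcases eq_or_ne c j with rfl | hne
    · exact honly (c+1) (by omega) hc1
    · exact honly c hne hc
  rw [hQ0, add_zero]
  rw [Finset.sum_eq_single_of_mem c (Finset.mem_range.mpr (by omega)) ?_, if_pos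
    (Finset.mem_inter.mpr ⟨hc, hc1⟩)]
  intro k hk hkc
  rw [if_neg]
  intro hvk
  have h1 := h.mem_two hc hc1 (Finset.mem_inter.mp hvk).1
  have h2 := h.mem_two hc hc1 (Finset.mem_inter.mp hvk).2
  omega

lemma sum_evalQ (h : PathHyp V F F' a b m g') {v : V} {j : ℕ}
    (hvj : v ∈ g' j) (honly : ∀ k, k ≠ j → v ∉ g' k) (hva : v ≠ a) (hvb : v ≠ b)
    (P Q : ℕ → ℝ) : thSum g' m a b P Q v = Q j := by
  have hjm := h.mem_lt hvj
  unfold thSum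
  have hP0 : (∑ k ∈ Finset.range (m-1), if v ∈ g' k ∩ g' (k+1) then P (k+1) else 0) = 0 := by
    apply Finset.sum_eq_zero
    intro k hk
    rw [if_neg]
    intro hvk
    rcases eq_or_ne k j with rfl | hne
    · exact honly (k+1) (by omega) (Finset.mem_inter.mp hvk).2
    · exact honly k hne (Finset.mem_inter.mp hvk).1
  rw [hP0, zero_add]
  rw [Finset.sum_eq_single_of_mem j (Finset.mem_range.mpr hjm) ?_, if_pos ⟨hvj, honly, hva, hvb⟩]
  intro k hk hkj
  rw [if_neg]
  rintro ⟨hvk, -, -, -⟩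
  exact honly k hkj hvk

lemma thSum_zero {v : V} (hnone : ∀ j, v ∉ g' j) (P Q : ℕ → ℝ) :
    thSum g' m a b P Q v = 0 := by
  unfold thSum
  rw [Finset.sum_eq_zero, Finset.sum_eq_zero, add_zero]
  · intro j hj
    rw [if_neg]
    rintro ⟨hvj, -⟩
    exact hnone j hvj
  · intro j hj
    rw [if_neg]
    intro hvj
    exact hnone j (Finset.mem_inter.mp hvj).1

lemma thSum_nonneg {v : V} {P Q : ℕ → ℝ} (hP : ∀ j, 0 ≤ P j) (hQ : ∀ j, 0 ≤ Q j) :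
    0 ≤ thSum g' m a b P Q v := by
  unfold thSum
  apply add_nonneg <;> apply Finset.sum_nonneg <;> intro j hj
  · split
    · exact hP _
    · exact le_refl 0
  · split
    · exact hQ _
    · exact le_refl 0

variable {Pv Qv : ℕ → ℝ} {x : V → ℝ}

lemma xevalP (h : PathHyp V F F' a b m g')
    (hx2 : ∀ v k, v ∈ g' k → v ∉ F ∪ F' → x v = thSum g' m a b Pv Qv v)
    {v : V} {c : ℕ} (hc : v ∈ g' c) (hc1 : v ∈ g' (c+1)) : x v = Pv (c+1) := by
  have hvF : v ∉ F ∪ F' := by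
    intro hvF
    rcases Finset.mem_union.mp hvF with hF | hF'
    · have hva := h.hPF v c hc hF
      rw [hva] at hc1
      have := (h.ha (c+1)).mp hc1
      omega
    · have hvb := h.hPF' v c hc hF'
      have h1 := (h.hb c).mp (hvb ▸ hc)
      have h2 := (h.hb (c+1)).mp (hvb ▸ hc1)
      omega
  rw [hx2 v c hc hvF]
  exact sum_evalP h hc hc1 Pv Qv

lemma xevalQ (h : PathHyp V F F' a b m g')
    (hx2 : ∀ v k, v ∈ g' k → v ∉ F ∪ F' → x v = thSum g' m a b Pv Qv v)
    {v : V} {j : ℕ} (hvj : v ∈ g' j) (honly : ∀ k, k ≠ j → v ∉ g' k)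
    (hva : v ≠ a) (hvb : v ≠ b) : x v = Qv j := by
  have hvF : v ∉ F ∪ F' := by
    intro hvF
    rcases Finset.mem_union.mp hvF with hF | hF'
    · exact hva (h.hPF v j hvj hF)
    · exact hvb (h.hPF' v j hvj hF')
  rw [hx2 v j hvj hvF]
  exact sum_evalQ h hvj honly hva hvb Pv Qv

lemma path_prod (h : PathHyp V F F' a b m g')
    (hx1 : ∀ v ∈ F ∪ F', x v = 1)
    (hx2 : ∀ v k, v ∈ g' k → v ∉ F ∪ F' → x v = thSum g' m a b Pv Qv v)
    (hP0 : Pv 0 = 1) (hPm : Pv m = 1) (j : ℕ) (hj : j < m) :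
    ∏ v ∈ g' j, x v = Pv j * Qv j * Pv (j+1) := by
  obtain ⟨z₁, z₂, z, ⟨h12, h1z, h2z⟩, hset, hz₁0, hz₁p, hz₂m, hz₂p,
    ⟨hzg, hzonly, hzna, hznb⟩, huniq⟩ := h.triple j hj
  have hz₁g : z₁ ∈ g' j := by rw [hset]; exact Finset.mem_insert_self _ _
  have hz₂g : z₂ ∈ g' j := by
    rw [hset]; exact Finset.mem_insert_of_mem (Finset.mem_insert_self _ _)
  have hxz₁ : x z₁ = Pv j := by
    rcases Nat.eq_zero_or_pos j with h0 | hpos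
    · subst h0
      rw [hz₁0 rfl, hx1 a (Finset.mem_union_left _ h.haF), hP0]
    · have hc := (hz₁p hpos).1
      have hc1 : z₁ ∈ g' ((j-1)+1) := by rw [show j-1+1 = j by omega]; exact hz₁g
      rw [xevalP h hx2 hc hc1, show j-1+1 = j by omega]
  have hxz₂ : x z₂ = Pv (j+1) := by
    rcases eq_or_lt_of_le (Nat.succ_le_of_lt hj) with hm' | hlt
    · rw [hz₂m hm', hx1 b (Finset.mem_union_right _ h.hbF'), show j+1 = m from by omega, hPm]
    · exact xevalP h hx2 hz₂g (hz₂p hlt).1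
  have hxz : x z = Qv j := xevalQ h hx2 hzg hzonly hzna hznb
  rw [hset, Finset.prod_insert (by simp [h12, h1z]),
    Finset.prod_insert (by simp [h2z]), Finset.prod_singleton, hxz₁, hxz₂, hxz]
  ring

lemma path_cube (h : PathHyp V F F' a b m g')
    (hx2 : ∀ v k, v ∈ g' k → v ∉ F ∪ F' → x v = thSum g' m a b Pv Qv v)
    (hPnn : ∀ j, 0 ≤ Pv j) (hQnn : ∀ j, 0 ≤ Qv j) :
    ∑ v ∈ ((Finset.range m).biUnion g') \ (F ∪ F'), x v ^ 3 ≤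
      (∑ j ∈ Finset.range (m-1), Pv (j+1)^3) + ∑ j ∈ Finset.range m, Qv j^3 := by
  set T := ((Finset.range m).biUnion g') \ (F ∪ F') with hT
  have hstep1 : ∀ v ∈ T, x v ^ 3
      = thSum g' m a b (fun j => Pv j ^ 3) (fun j => Qv j ^ 3) v := by
    intro v hvT
    obtain ⟨hvP, hvFF⟩ := Finset.mem_sdiff.mp hvT
    obtain ⟨j', hj', hvj'⟩ := Finset.mem_biUnion.mp hvP
    obtain ⟨j₀, hj₀g, hmin⟩ : ∃ j₀, v ∈ g' j₀ ∧ ∀ k, v ∈ g' k → j₀ ≤ k := by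
      have hJne : ((Finset.range m).filter (fun k => v ∈ g' k)).Nonempty :=
        ⟨j', Finset.mem_filter.mpr ⟨hj', hvj'⟩⟩
      exact ⟨_, (Finset.mem_filter.mp (Finset.min'_mem _ hJne)).2,
        fun k hk => Finset.min'_le _ k (Finset.mem_filter.mpr
          ⟨Finset.mem_range.mpr (h.mem_lt hk), hk⟩)⟩
    by_cases hcase : v ∈ g' (j₀+1)
    · rw [xevalP h hx2 hj₀g hcase, sum_evalP h hj₀g hcase]
    · have honly : ∀ k, k ≠ j₀ → v ∉ g' k := by
        intro k hk hvk
        rcases lt_or_gt_of_ne hk with hlt | hgt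
        · exact absurd (hmin k hvk) (by omega)
        · rcases eq_or_lt_of_le (Nat.succ_le_of_lt hgt) with he | hl
          · exact hcase (by rw [show j₀+1 = k from he]; exact hvk)
          · have : g' j₀ ∩ g' k = ∅ := h.hfar j₀ k (h.mem_lt hvk) hl
            exact absurd (Finset.mem_inter.mpr ⟨hj₀g, hvk⟩)
              (by rw [this]; exact Finset.notMem_empty _)
      have hva : v ≠ a := fun hc => hvFF (Finset.mem_union_left _ (hc ▸ h.haF))
      have hvb : v ≠ b := fun hc => hvFF (Finset.mem_union_right _ (hc ▸ h.hbF'))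
      rw [xevalQ h hx2 hj₀g honly hva hvb, sum_evalQ h hj₀g honly hva hvb]
  rw [Finset.sum_congr rfl hstep1]
  unfold thSum
  rw [Finset.sum_add_distrib]
  have hPpart : ∑ v ∈ T, ∑ j ∈ Finset.range (m-1),
      (if v ∈ g' j ∩ g' (j+1) then Pv (j+1)^3 else 0) ≤
      ∑ j ∈ Finset.range (m-1), Pv (j+1)^3 := by
    rw [Finset.sum_comm]
    apply Finset.sum_le_sum
    intro j hj
    have hj1m : j + 1 < m := by have := Finset.mem_range.mp hj; omega
    obtain ⟨y, hy⟩ := Finset.card_eq_one.mp (h.hcons j hj1m)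
    have hcle : (T.filter (fun v => v ∈ g' j ∩ g' (j+1))).card ≤ 1 := by
      apply Finset.card_le_one.mpr
      intro v hv v' hv'
      have h1 : v ∈ g' j ∩ g' (j+1) := (Finset.mem_filter.mp hv).2
      have h2 : v' ∈ g' j ∩ g' (j+1) := (Finset.mem_filter.mp hv').2
      rw [hy] at h1 h2
      rw [Finset.mem_singleton.mp h1, Finset.mem_singleton.mp h2]
    calc ∑ v ∈ T, (if v ∈ g' j ∩ g' (j+1) then Pv (j+1)^3 else 0)
        = ∑ v ∈ T.filter (fun v => v ∈ g' j ∩ g' (j+1)), Pv (j+1)^3 :=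
          (Finset.sum_filter _ _).symm
      _ = (T.filter (fun v => v ∈ g' j ∩ g' (j+1))).card • Pv (j+1)^3 :=
          Finset.sum_const _
      _ ≤ Pv (j+1)^3 := by
          rcases Nat.le_one_iff_eq_zero_or_eq_one.mp hcle with h0 | h1
          · rw [h0, zero_smul]; exact pow_nonneg (hPnn _) 3
          · rw [h1, one_smul]
  have hQpart : ∑ v ∈ T, ∑ j ∈ Finset.range m,
      (if (v ∈ g' j ∧ (∀ k, k ≠ j → v ∉ g' k) ∧ v ≠ a ∧ v ≠ b) then Qv j ^3 else 0) ≤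
      ∑ j ∈ Finset.range m, Qv j ^3 := by
    rw [Finset.sum_comm]
    apply Finset.sum_le_sum
    intro j hj
    obtain ⟨z₁, z₂, z, -, -, -, -, -, -, -, huniq⟩ :=
      h.triple j (Finset.mem_range.mp hj)
    have hcle : (T.filter (fun v => v ∈ g' j ∧ (∀ k, k ≠ j → v ∉ g' k) ∧ v ≠ a ∧ v ≠ b)).card
        ≤ 1 := by
      apply Finset.card_le_one.mpr
      intro v hv v' hv'
      obtain ⟨c1, c2, c3, c4⟩ := (Finset.mem_filter.mp hv).2
      obtain ⟨d1, d2, d3, d4⟩ := (Finset.mem_filter.mp hv').2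
      rw [huniq v c1 c2 c3 c4, huniq v' d1 d2 d3 d4]
    calc ∑ v ∈ T, (if (v ∈ g' j ∧ (∀ k, k ≠ j → v ∉ g' k) ∧ v ≠ a ∧ v ≠ b)
          then Qv j ^3 else 0)
        = ∑ v ∈ T.filter (fun v => v ∈ g' j ∧ (∀ k, k ≠ j → v ∉ g' k) ∧ v ≠ a ∧ v ≠ b),
            Qv j ^3 := (Finset.sum_filter _ _).symm
      _ = (T.filter (fun v => v ∈ g' j ∧ (∀ k, k ≠ j → v ∉ g' k) ∧ v ≠ a ∧ v ≠ b)).card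
            • Qv j ^3 := Finset.sum_const _
      _ ≤ Qv j ^3 := by
          rcases Nat.le_one_iff_eq_zero_or_eq_one.mp hcle with h0 | h1
          · rw [h0, zero_smul]; exact pow_nonneg (hQnn _) 3
          · rw [h1, one_smul]
  exact add_le_add hPpart hQpart

end PathHyp

lemma amgm3 {a b c : ℝ} (ha : 0 ≤ a) (hb : 0 ≤ b) (hc : 0 ≤ c) :
    3*(a*b*c) ≤ a^3 + b^3 + c^3 := by
  nlinarith [sq_nonneg (a-b), sq_nonneg (b-c), sq_nonneg (a-c), add_nonneg (add_nonneg ha hb) hc,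
    mul_nonneg ha hb, mul_nonneg hb hc, mul_nonneg ha hc]

/-- ℕ-indexed version of a joining path -/
lemma pathVerts_eq {V : Type} [DecidableEq V] {m : ℕ} (g : Fin m → Finset V) :
    pathVerts g = (Finset.range m).biUnion (fun j => if h : j < m then g ⟨j, h⟩ else ∅) := by
  ext v
  rw [pathVerts, Finset.mem_biUnion, Finset.mem_biUnion]
  constructor
  · rintro ⟨t, -, hv⟩
    exact ⟨(t : ℕ), Finset.mem_range.mpr t.isLt, by rw [dif_pos t.isLt]; exact hv⟩
  · rintro ⟨j, hj, hv⟩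
    have hj' := Finset.mem_range.mp hj
    rw [dif_pos hj'] at hv
    exact ⟨⟨j, hj'⟩, Finset.mem_univ _, hv⟩

lemma mkPathHyp {V : Type} [DecidableEq V] (H : EdgeHypergraph V) (hunif : H.IsUniform 3)
    {F F' : Finset V} {a b : V} {m : ℕ} (hm : 1 ≤ m) {g : Fin m → Finset V}
    (hJ : H.IsJoiningPath F F' a b g) (haF : a ∈ F) (hbF' : b ∈ F') (hab : a ≠ b) :
    PathHyp V F F' a b m (fun j => if h : j < m then g ⟨j, h⟩ else ∅) := by
  obtain ⟨⟨hcons, hfar⟩, hmem, hne, hPF, hPF', ha, hb⟩ := hJ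
  refine ⟨hm, ?_, ?_, ?_, ?_, ?_, ?_, hab, haF, hbF', ?_, ?_⟩
  · intro j hj
    simp only [dif_pos hj]
    exact hunif _ (hmem _)
  · intro j hj
    simp only [dif_pos (by omega : j < m), dif_pos hj]
    exact hcons ⟨j, by omega⟩ ⟨j+1, hj⟩ rfl
  · intro j k hk hjk
    simp only [dif_pos (by omega : j < m), dif_pos hk]
    exact hfar ⟨j, by omega⟩ ⟨k, hk⟩ hjk
  · intro j hj
    simp only [dif_neg (by omega : ¬ j < m)]
  · intro j
    by_cases hj : j < m
    · simp only [dif_pos hj]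
      exact ha ⟨j, hj⟩
    · simp only [dif_neg hj]
      constructor
      · intro hc; exact absurd hc (Finset.notMem_empty a)
      · intro hc; omega
  · intro j
    by_cases hj : j < m
    · simp only [dif_pos hj]
      exact hb ⟨j, hj⟩
    · simp only [dif_neg hj]
      constructor
      · intro hc; exact absurd hc (Finset.notMem_empty b)
      · intro hc; omega
  · intro v k hv hvF
    by_cases hk : k < m
    · rw [dif_pos hk] at hv
      have hvp : v ∈ pathVerts g := by
        rw [pathVerts, Finset.mem_biUnion]; exact ⟨⟨k, hk⟩, Finset.mem_univ _, hv⟩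
      have : v ∈ pathVerts g ∩ F := Finset.mem_inter.mpr ⟨hvp, hvF⟩
      rw [hPF] at this
      exact Finset.mem_singleton.mp this
    · rw [dif_neg hk] at hv
      exact absurd hv (Finset.notMem_empty v)
  · intro v k hv hvF
    by_cases hk : k < m
    · rw [dif_pos hk] at hv
      have hvp : v ∈ pathVerts g := by
        rw [pathVerts, Finset.mem_biUnion]; exact ⟨⟨k, hk⟩, Finset.mem_univ _, hv⟩
      have : v ∈ pathVerts g ∩ F' := Finset.mem_inter.mpr ⟨hvp, hvF⟩
      rw [hPF'] at this
      exact Finset.mem_singleton.mp this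
    · rw [dif_neg hk] at hv
      exact absurd hv (Finset.notMem_empty v)

/-- `Θ(m₁, m₂, m₃)` has spectral radius greater than `2·(2+√5)^{1/3}` for all
`m₁, m₂, m₃ ≥ 1`. -/
theorem theta_spectralRadius_gt {V : Type} [DecidableEq V] (H : EdgeHypergraph V)
    (m₁ m₂ m₃ : ℕ) (h₁ : 1 ≤ m₁) (h₂ : 1 ≤ m₂) (h₃ : 1 ≤ m₃)
    (hH : H.IsTheta m₁ m₂ m₃) :
    2 * (2 + Real.sqrt 5) ^ ((1 : ℝ) / 3) < H.spectralRadius 3 := by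
  obtain ⟨hunif, u, w, g₁, g₂, g₃, huinj, hwinj, hFe, hF'e, hFF', hJ₁, hJ₂, hJ₃,
    h12, h13, h23, hclass⟩ := hH
  set F := Finset.univ.image u with hFdef
  set F' := Finset.univ.image w with hF'def
  -- the scalar σ
  have h5 : Real.sqrt 5 ^ 2 = 5 := Real.sq_sqrt (by norm_num)
  have h5nn : 0 ≤ Real.sqrt 5 := Real.sqrt_nonneg 5
  have hφ1 : 1 < (1 + Real.sqrt 5)/2 := by nlinarith
  set σ := Real.sqrt ((1 + Real.sqrt 5)/2) with hσdef
  have hσnn : 0 ≤ σ := Real.sqrt_nonneg _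
  have hσ2 : σ^2 = (1 + Real.sqrt 5)/2 := Real.sq_sqrt (by linarith)
  have hσ1 : 1 < σ := by nlinarith [hσ2, hφ1, hσnn]
  have hσ0 : 0 < σ := by linarith
  have hσ4 : σ^4 = σ^2 + 1 := by
    have h44 : σ^4 = (σ^2)^2 := by ring
    rw [h44, hσ2]
    nlinarith [h5]
  have hconst : 2 * (2 + Real.sqrt 5) ^ ((1:ℝ)/3) = 2*σ^2 := by
    rw [hσ2]
    congr 1
    have hynn : (0:ℝ) ≤ (1 + Real.sqrt 5)/2 := by linarith
    have hy : ((1 + Real.sqrt 5)/2) ^ (3:ℕ) = 2 + Real.sqrt 5 := by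
      linear_combination ((Real.sqrt 5 + 3)/8) * h5
    calc (2 + Real.sqrt 5) ^ ((1:ℝ)/3)
        = (((1 + Real.sqrt 5)/2) ^ (3:ℕ)) ^ ((1:ℝ)/3) := by rw [hy]
      _ = (((1 + Real.sqrt 5)/2) ^ ((3:ℕ):ℝ)) ^ ((1:ℝ)/3) := by rw [Real.rpow_natCast]
      _ = ((1 + Real.sqrt 5)/2) ^ (((3:ℕ):ℝ) * ((1:ℝ)/3)) := by rw [← Real.rpow_mul hynn]
      _ = ((1 + Real.sqrt 5)/2) ^ (1:ℝ) := by norm_num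
      _ = (1 + Real.sqrt 5)/2 := Real.rpow_one _
  -- basic structure facts
  have hcardF : F.card = 3 := hunif F hFe
  have hcardF' : F'.card = 3 := hunif F' hF'e
  have huF : ∀ i : Fin 3, u i ∈ F := fun i => Finset.mem_image_of_mem u (Finset.mem_univ i)
  have hwF' : ∀ i : Fin 3, w i ∈ F' := fun i => Finset.mem_image_of_mem w (Finset.mem_univ i)
  have hdisjFF' : Disjoint F F' := Finset.disjoint_iff_inter_eq_empty.mpr hFF'
  have hune : ∀ i : Fin 3, u i ≠ w i := by
    intro i hc
    have hm : u i ∈ F ∩ F' := Finset.mem_inter.mpr ⟨huF i, by rw [hc]; exact hwF' i⟩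
    rw [hFF'] at hm
    exact absurd hm (Finset.notMem_empty _)
  obtain ⟨n₁, rfl⟩ : ∃ n, m₁ = n + 1 := ⟨m₁ - 1, by omega⟩
  obtain ⟨n₂, rfl⟩ : ∃ n, m₂ = n + 1 := ⟨m₂ - 1, by omega⟩
  obtain ⟨n₃, rfl⟩ : ∃ n, m₃ = n + 1 := ⟨m₃ - 1, by omega⟩
  set G₁ : ℕ → Finset V := fun j => if h : j < n₁+1 then g₁ ⟨j, h⟩ else ∅ with hG₁def
  set G₂ : ℕ → Finset V := fun j => if h : j < n₂+1 then g₂ ⟨j, h⟩ else ∅ with hG₂def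
  set G₃ : ℕ → Finset V := fun j => if h : j < n₃+1 then g₃ ⟨j, h⟩ else ∅ with hG₃def
  have hP₁ : PathHyp V F F' (u 0) (w 0) (n₁+1) G₁ := by
    rw [hG₁def]; exact mkPathHyp H hunif (by omega) hJ₁ (huF 0) (hwF' 0) (hune 0)
  have hP₂ : PathHyp V F F' (u 1) (w 1) (n₂+1) G₂ := by
    rw [hG₂def]; exact mkPathHyp H hunif (by omega) hJ₂ (huF 1) (hwF' 1) (hune 1)
  have hP₃ : PathHyp V F F' (u 2) (w 2) (n₃+1) G₃ := by
    rw [hG₃def]; exact mkPathHyp H hunif (by omega) hJ₃ (huF 2) (hwF' 2) (hune 2)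
  have hpv₁ : pathVerts g₁ = (Finset.range (n₁+1)).biUnion G₁ := by
    rw [hG₁def]; exact pathVerts_eq g₁
  have hpv₂ : pathVerts g₂ = (Finset.range (n₂+1)).biUnion G₂ := by
    rw [hG₂def]; exact pathVerts_eq g₂
  have hpv₃ : pathVerts g₃ = (Finset.range (n₃+1)).biUnion G₃ := by
    rw [hG₃def]; exact pathVerts_eq g₃
  -- the weight function
  set x : V → ℝ := fun v => if v ∈ F ∪ F' then 1 else
      thSum G₁ (n₁+1) (u 0) (w 0) (thP σ (n₁+1)) (thQ σ (n₁+1)) v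
      + thSum G₂ (n₂+1) (u 1) (w 1) (thP σ (n₂+1)) (thQ σ (n₂+1)) v
      + thSum G₃ (n₃+1) (u 2) (w 2) (thP σ (n₃+1)) (thQ σ (n₃+1)) v
    with hxdef
  have hx1 : ∀ v ∈ F ∪ F', x v = 1 := fun v hv => by rw [hxdef]; exact if_pos hv
  have hxnn : ∀ v, 0 ≤ x v := by
    intro v
    by_cases hv : v ∈ F ∪ F'
    · rw [hx1 v hv]; norm_num
    · have hxv : x v = thSum G₁ (n₁+1) (u 0) (w 0) (thP σ (n₁+1)) (thQ σ (n₁+1)) v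
          + thSum G₂ (n₂+1) (u 1) (w 1) (thP σ (n₂+1)) (thQ σ (n₂+1)) v
          + thSum G₃ (n₃+1) (u 2) (w 2) (thP σ (n₃+1)) (thQ σ (n₃+1)) v := by
        rw [hxdef]; exact if_neg hv
      rw [hxv]
      have q1 := PathHyp.thSum_nonneg (g' := G₁) (m := n₁+1) (a := u 0) (b := w 0)
        (fun j => thP_nonneg hσ0 (n₁+1) j) (fun j => thQ_nonneg hσ0 (n₁+1) j) (v := v)
      have q2 := PathHyp.thSum_nonneg (g' := G₂) (m := n₂+1) (a := u 1) (b := w 1)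
        (fun j => thP_nonneg hσ0 (n₂+1) j) (fun j => thQ_nonneg hσ0 (n₂+1) j) (v := v)
      have q3 := PathHyp.thSum_nonneg (g' := G₃) (m := n₃+1) (a := u 2) (b := w 2)
        (fun j => thP_nonneg hσ0 (n₃+1) j) (fun j => thQ_nonneg hσ0 (n₃+1) j) (v := v)
      linarith
  have hdisj12 : ∀ v, v ∈ pathVerts g₁ → v ∈ pathVerts g₂ → False := by
    intro v hv1 hv2
    have hm : v ∈ pathVerts g₁ ∩ pathVerts g₂ := Finset.mem_inter.mpr ⟨hv1, hv2⟩
    rw [h12] at hm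
    exact absurd hm (Finset.notMem_empty v)
  have hdisj13 : ∀ v, v ∈ pathVerts g₁ → v ∈ pathVerts g₃ → False := by
    intro v hv1 hv2
    have hm : v ∈ pathVerts g₁ ∩ pathVerts g₃ := Finset.mem_inter.mpr ⟨hv1, hv2⟩
    rw [h13] at hm
    exact absurd hm (Finset.notMem_empty v)
  have hdisj23 : ∀ v, v ∈ pathVerts g₂ → v ∈ pathVerts g₃ → False := by
    intro v hv1 hv2
    have hm : v ∈ pathVerts g₂ ∩ pathVerts g₃ := Finset.mem_inter.mpr ⟨hv1, hv2⟩
    rw [h23] at hm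
    exact absurd hm (Finset.notMem_empty v)
  have hmemPV₁ : ∀ {v : V} {k : ℕ}, v ∈ G₁ k → v ∈ pathVerts g₁ := by
    intro v k hv
    rw [hpv₁]
    exact Finset.mem_biUnion.mpr ⟨k, Finset.mem_range.mpr (hP₁.mem_lt hv), hv⟩
  have hmemPV₂ : ∀ {v : V} {k : ℕ}, v ∈ G₂ k → v ∈ pathVerts g₂ := by
    intro v k hv
    rw [hpv₂]
    exact Finset.mem_biUnion.mpr ⟨k, Finset.mem_range.mpr (hP₂.mem_lt hv), hv⟩
  have hmemPV₃ : ∀ {v : V} {k : ℕ}, v ∈ G₃ k → v ∈ pathVerts g₃ := by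
    intro v k hv
    rw [hpv₃]
    exact Finset.mem_biUnion.mpr ⟨k, Finset.mem_range.mpr (hP₃.mem_lt hv), hv⟩
  have hx2₁ : ∀ v k, v ∈ G₁ k → v ∉ F ∪ F' →
      x v = thSum G₁ (n₁+1) (u 0) (w 0) (thP σ (n₁+1)) (thQ σ (n₁+1)) v := by
    intro v k hv hvF
    rw [hxdef]
    show (if v ∈ F ∪ F' then 1 else _) = _
    rw [if_neg hvF]
    have hz₂ : thSum G₂ (n₂+1) (u 1) (w 1) (thP σ (n₂+1)) (thQ σ (n₂+1)) v = 0 :=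
      PathHyp.thSum_zero (fun j hvj => hdisj12 v (hmemPV₁ hv) (hmemPV₂ hvj)) _ _
    have hz₃ : thSum G₃ (n₃+1) (u 2) (w 2) (thP σ (n₃+1)) (thQ σ (n₃+1)) v = 0 :=
      PathHyp.thSum_zero (fun j hvj => hdisj13 v (hmemPV₁ hv) (hmemPV₃ hvj)) _ _
    rw [hz₂, hz₃, add_zero, add_zero]
  have hx2₂ : ∀ v k, v ∈ G₂ k → v ∉ F ∪ F' →
      x v = thSum G₂ (n₂+1) (u 1) (w 1) (thP σ (n₂+1)) (thQ σ (n₂+1)) v := by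
    intro v k hv hvF
    rw [hxdef]
    show (if v ∈ F ∪ F' then 1 else _) = _
    rw [if_neg hvF]
    have hz₁ : thSum G₁ (n₁+1) (u 0) (w 0) (thP σ (n₁+1)) (thQ σ (n₁+1)) v = 0 :=
      PathHyp.thSum_zero (fun j hvj => hdisj12 v (hmemPV₁ hvj) (hmemPV₂ hv)) _ _
    have hz₃ : thSum G₃ (n₃+1) (u 2) (w 2) (thP σ (n₃+1)) (thQ σ (n₃+1)) v = 0 :=
      PathHyp.thSum_zero (fun j hvj => hdisj23 v (hmemPV₂ hv) (hmemPV₃ hvj)) _ _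
    rw [hz₁, hz₃, zero_add, add_zero]
  have hx2₃ : ∀ v k, v ∈ G₃ k → v ∉ F ∪ F' →
      x v = thSum G₃ (n₃+1) (u 2) (w 2) (thP σ (n₃+1)) (thQ σ (n₃+1)) v := by
    intro v k hv hvF
    rw [hxdef]
    show (if v ∈ F ∪ F' then 1 else _) = _
    rw [if_neg hvF]
    have hz₁ : thSum G₁ (n₁+1) (u 0) (w 0) (thP σ (n₁+1)) (thQ σ (n₁+1)) v = 0 :=
      PathHyp.thSum_zero (fun j hvj => hdisj13 v (hmemPV₁ hvj) (hmemPV₃ hv)) _ _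
    have hz₂ : thSum G₂ (n₂+1) (u 1) (w 1) (thP σ (n₂+1)) (thQ σ (n₂+1)) v = 0 :=
      PathHyp.thSum_zero (fun j hvj => hdisj23 v (hmemPV₂ hvj) (hmemPV₃ hv)) _ _
    rw [hz₁, hz₂, zero_add, zero_add]
  -- edge products
  have hprod₁ : ∀ j < n₁+1, ∏ v ∈ G₁ j, x v
      = thP σ (n₁+1) j * thQ σ (n₁+1) j * thP σ (n₁+1) (j+1) :=
    fun j hj => hP₁.path_prod hx1 hx2₁ (thP_zero hσ0 _) (thP_last hσ0 n₁) j hj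
  have hprod₂ : ∀ j < n₂+1, ∏ v ∈ G₂ j, x v
      = thP σ (n₂+1) j * thQ σ (n₂+1) j * thP σ (n₂+1) (j+1) :=
    fun j hj => hP₂.path_prod hx1 hx2₂ (thP_zero hσ0 _) (thP_last hσ0 n₂) j hj
  have hprod₃ : ∀ j < n₃+1, ∏ v ∈ G₃ j, x v
      = thP σ (n₃+1) j * thQ σ (n₃+1) j * thP σ (n₃+1) (j+1) :=
    fun j hj => hP₃.path_prod hx1 hx2₃ (thP_zero hσ0 _) (thP_last hσ0 n₃) j hj
  -- cube bounds
  have hcube₁ := hP₁.path_cube hx2₁ (fun j => thP_nonneg hσ0 (n₁+1) j)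
    (fun j => thQ_nonneg hσ0 (n₁+1) j)
  have hcube₂ := hP₂.path_cube hx2₂ (fun j => thP_nonneg hσ0 (n₂+1) j)
    (fun j => thQ_nonneg hσ0 (n₂+1) j)
  have hcube₃ := hP₃.path_cube hx2₃ (fun j => thP_nonneg hσ0 (n₃+1) j)
    (fun j => thQ_nonneg hσ0 (n₃+1) j)
  simp only [Nat.add_sub_cancel] at hcube₁ hcube₂ hcube₃
  -- injectivity of the gᵢ
  have hinj : ∀ {mm : ℕ} (g : Fin mm → Finset V), IsLoosePathSeq g → (∀ t, g t ∈ H.edges) →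
      ∀ t ∈ Finset.univ, ∀ t' ∈ Finset.univ, g t = g t' → t = t' := by
    intro mm g hlp hmem t _ t' _ heq
    obtain ⟨hcons, hfar⟩ := hlp
    by_contra hne
    have hcard3 : ∀ s : Fin mm, (g s).card = 3 := fun s => hunif _ (hmem s)
    have key : ∀ s s' : Fin mm, (s:ℕ) < (s':ℕ) → g s ≠ g s' := by
      intro s s' hlt hc
      rcases eq_or_lt_of_le (Nat.succ_le_of_lt hlt) with he | hl
      · have hcc := hcons s s' he
        rw [hc, Finset.inter_self, hcard3 s'] at hcc
        omega
      · have hcc := hfar s s' hl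
        rw [hc, Finset.inter_self] at hcc
        have h3 := hcard3 s'
        rw [hcc] at h3
        simp at h3
    have hnat : (t:ℕ) ≠ (t':ℕ) := fun hcc => hne (Fin.ext hcc)
    rcases lt_or_gt_of_ne hnat with hlt | hgt
    · exact key t t' hlt heq
    · exact key t' t hgt heq.symm
  set E₁ := Finset.univ.image g₁ with hE₁def
  set E₂ := Finset.univ.image g₂ with hE₂def
  set E₃ := Finset.univ.image g₃ with hE₃def
  have himg₁ : ∑ e ∈ E₁, ∏ v ∈ e, x v
      = ∑ j ∈ range (n₁+1), thP σ (n₁+1) j * thQ σ (n₁+1) j * thP σ (n₁+1) (j+1) := by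
    rw [hE₁def, Finset.sum_image (hinj g₁ hJ₁.1 hJ₁.2.1),
      ← Fin.sum_univ_eq_sum_range (fun j => thP σ (n₁+1) j * thQ σ (n₁+1) j * thP σ (n₁+1) (j+1))
        (n₁+1)]
    apply Finset.sum_congr rfl
    intro t _
    have hgt : g₁ t = G₁ (t:ℕ) := by rw [hG₁def]; simp only [dif_pos t.isLt]
    rw [hgt]
    exact hprod₁ (t:ℕ) t.isLt
  have himg₂ : ∑ e ∈ E₂, ∏ v ∈ e, x v
      = ∑ j ∈ range (n₂+1), thP σ (n₂+1) j * thQ σ (n₂+1) j * thP σ (n₂+1) (j+1) := by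
    rw [hE₂def, Finset.sum_image (hinj g₂ hJ₂.1 hJ₂.2.1),
      ← Fin.sum_univ_eq_sum_range (fun j => thP σ (n₂+1) j * thQ σ (n₂+1) j * thP σ (n₂+1) (j+1))
        (n₂+1)]
    apply Finset.sum_congr rfl
    intro t _
    have hgt : g₂ t = G₂ (t:ℕ) := by rw [hG₂def]; simp only [dif_pos t.isLt]
    rw [hgt]
    exact hprod₂ (t:ℕ) t.isLt
  have himg₃ : ∑ e ∈ E₃, ∏ v ∈ e, x v
      = ∑ j ∈ range (n₃+1), thP σ (n₃+1) j * thQ σ (n₃+1) j * thP σ (n₃+1) (j+1) := by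
    rw [hE₃def, Finset.sum_image (hinj g₃ hJ₃.1 hJ₃.2.1),
      ← Fin.sum_univ_eq_sum_range (fun j => thP σ (n₃+1) j * thQ σ (n₃+1) j * thP σ (n₃+1) (j+1))
        (n₃+1)]
    apply Finset.sum_congr rfl
    intro t _
    have hgt : g₃ t = G₃ (t:ℕ) := by rw [hG₃def]; simp only [dif_pos t.isLt]
    rw [hgt]
    exact hprod₃ (t:ℕ) t.isLt
  have hFne : F ≠ F' := by
    intro hc
    have hFne' : F.Nonempty := Finset.card_pos.mp (by rw [hcardF]; norm_num)
    obtain ⟨v, hv⟩ := hFne'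
    have hm : v ∈ F ∩ F' := Finset.mem_inter.mpr ⟨hv, hc ▸ hv⟩
    rw [hFF'] at hm
    exact absurd hm (Finset.notMem_empty v)
  have hE₀sub : insert F (insert F' (E₁ ∪ (E₂ ∪ E₃))) ⊆ H.edges := by
    intro e he
    rcases Finset.mem_insert.mp he with rfl | he
    · exact hFe
    rcases Finset.mem_insert.mp he with rfl | he
    · exact hF'e
    rcases Finset.mem_union.mp he with he | he
    · obtain ⟨t, -, rfl⟩ := Finset.mem_image.mp he
      exact hJ₁.2.1 t
    rcases Finset.mem_union.mp he with he | he
    · obtain ⟨t, -, rfl⟩ := Finset.mem_image.mp he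
      exact hJ₂.2.1 t
    · obtain ⟨t, -, rfl⟩ := Finset.mem_image.mp he
      exact hJ₃.2.1 t
  have hFnotin : F ∉ insert F' (E₁ ∪ (E₂ ∪ E₃)) := by
    intro hc
    rcases Finset.mem_insert.mp hc with hc | hc
    · exact hFne hc
    rcases Finset.mem_union.mp hc with hc | hc
    · obtain ⟨t, -, ht⟩ := Finset.mem_image.mp hc
      exact (hJ₁.2.2.1 t).1 ht
    rcases Finset.mem_union.mp hc with hc | hc
    · obtain ⟨t, -, ht⟩ := Finset.mem_image.mp hc
      exact (hJ₂.2.2.1 t).1 ht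
    · obtain ⟨t, -, ht⟩ := Finset.mem_image.mp hc
      exact (hJ₃.2.2.1 t).1 ht
  have hF'notin : F' ∉ E₁ ∪ (E₂ ∪ E₃) := by
    intro hc
    rcases Finset.mem_union.mp hc with hc | hc
    · obtain ⟨t, -, ht⟩ := Finset.mem_image.mp hc
      exact (hJ₁.2.2.1 t).2 ht
    rcases Finset.mem_union.mp hc with hc | hc
    · obtain ⟨t, -, ht⟩ := Finset.mem_image.mp hc
      exact (hJ₂.2.2.1 t).2 ht
    · obtain ⟨t, -, ht⟩ := Finset.mem_image.mp hc
      exact (hJ₃.2.2.1 t).2 ht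
  have hEnonempty : ∀ {mm : ℕ} (g : Fin mm → Finset V), (∀ t, g t ∈ H.edges) →
      ∀ t : Fin mm, (g t).Nonempty := by
    intro mm g hmem t
    apply Finset.card_pos.mp
    rw [hunif _ (hmem t)]
    norm_num
  have hdE12 : Disjoint E₁ E₂ := by
    rw [Finset.disjoint_left]
    intro e he₁ he₂
    obtain ⟨t, -, rfl⟩ := Finset.mem_image.mp he₁
    obtain ⟨t', -, ht'⟩ := Finset.mem_image.mp he₂
    obtain ⟨v, hv⟩ := hEnonempty g₁ hJ₁.2.1 t
    exact hdisj12 v (Finset.mem_biUnion.mpr ⟨t, Finset.mem_univ _, hv⟩)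
      (Finset.mem_biUnion.mpr ⟨t', Finset.mem_univ _, by rw [ht']; exact hv⟩)
  have hdE13 : Disjoint E₁ E₃ := by
    rw [Finset.disjoint_left]
    intro e he₁ he₂
    obtain ⟨t, -, rfl⟩ := Finset.mem_image.mp he₁
    obtain ⟨t', -, ht'⟩ := Finset.mem_image.mp he₂
    obtain ⟨v, hv⟩ := hEnonempty g₁ hJ₁.2.1 t
    exact hdisj13 v (Finset.mem_biUnion.mpr ⟨t, Finset.mem_univ _, hv⟩)
      (Finset.mem_biUnion.mpr ⟨t', Finset.mem_univ _, by rw [ht']; exact hv⟩)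
  have hdE23 : Disjoint E₂ E₃ := by
    rw [Finset.disjoint_left]
    intro e he₁ he₂
    obtain ⟨t, -, rfl⟩ := Finset.mem_image.mp he₁
    obtain ⟨t', -, ht'⟩ := Finset.mem_image.mp he₂
    obtain ⟨v, hv⟩ := hEnonempty g₂ hJ₂.2.1 t
    exact hdisj23 v (Finset.mem_biUnion.mpr ⟨t, Finset.mem_univ _, hv⟩)
      (Finset.mem_biUnion.mpr ⟨t', Finset.mem_univ _, by rw [ht']; exact hv⟩)
  have hprodF : ∏ v ∈ F, x v = 1 :=
    Finset.prod_eq_one (fun v hv => hx1 v (Finset.mem_union_left _ hv))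
  have hprodF' : ∏ v ∈ F', x v = 1 :=
    Finset.prod_eq_one (fun v hv => hx1 v (Finset.mem_union_right _ hv))
  set Ptot := ∑ e ∈ H.edges, ∏ v ∈ e, x v with hPtotdef
  set Dtot := ∑ v ∈ H.vertexSet, x v ^ 3 with hDtotdef
  have hPge : 2 + ((∑ j ∈ range (n₁+1), thP σ (n₁+1) j * thQ σ (n₁+1) j * thP σ (n₁+1) (j+1))
      + ((∑ j ∈ range (n₂+1), thP σ (n₂+1) j * thQ σ (n₂+1) j * thP σ (n₂+1) (j+1))
      + (∑ j ∈ range (n₃+1), thP σ (n₃+1) j * thQ σ (n₃+1) j * thP σ (n₃+1) (j+1))))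
      ≤ Ptot := by
    have hsub := Finset.sum_le_sum_of_subset_of_nonneg (f := fun e => ∏ v ∈ e, x v) hE₀sub
      (fun e _ _ => Finset.prod_nonneg (fun v _ => hxnn v))
    calc 2 + _ = ∑ e ∈ insert F (insert F' (E₁ ∪ (E₂ ∪ E₃))), ∏ v ∈ e, x v := by
          rw [Finset.sum_insert hFnotin, Finset.sum_insert hF'notin,
            Finset.sum_union (Finset.disjoint_union_right.mpr ⟨hdE12, hdE13⟩),
            Finset.sum_union hdE23, himg₁, himg₂, himg₃, hprodF, hprodF']
          ring
      _ ≤ Ptot := hsub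
  -- D upper bound
  set T₁ := ((Finset.range (n₁+1)).biUnion G₁) \ (F ∪ F') with hT₁def
  set T₂ := ((Finset.range (n₂+1)).biUnion G₂) \ (F ∪ F') with hT₂def
  set T₃ := ((Finset.range (n₃+1)).biUnion G₃) \ (F ∪ F') with hT₃def
  have hVsub : H.vertexSet ⊆ (F ∪ F') ∪ (T₁ ∪ (T₂ ∪ T₃)) := by
    intro v hv
    obtain ⟨e, he, hve⟩ := Finset.mem_biUnion.mp hv
    by_cases hvF : v ∈ F ∪ F'
    · exact Finset.mem_union_left _ hvF
    · apply Finset.mem_union_right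
      rcases hclass e he with rfl | hcl
      · exact absurd (Finset.mem_union_left _ hve) hvF
      rcases hcl with rfl | hcl
      · exact absurd (Finset.mem_union_right _ hve) hvF
      rcases hcl with ⟨t, rfl⟩ | hcl
      · apply Finset.mem_union_left
        rw [hT₁def]
        exact Finset.mem_sdiff.mpr ⟨by
          rw [← hpv₁]; exact Finset.mem_biUnion.mpr ⟨t, Finset.mem_univ _, hve⟩, hvF⟩
      rcases hcl with ⟨t, rfl⟩ | ⟨t, rfl⟩
      · apply Finset.mem_union_right; apply Finset.mem_union_left
        rw [hT₂def]
        exact Finset.mem_sdiff.mpr ⟨by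
          rw [← hpv₂]; exact Finset.mem_biUnion.mpr ⟨t, Finset.mem_univ _, hve⟩, hvF⟩
      · apply Finset.mem_union_right; apply Finset.mem_union_right
        rw [hT₃def]
        exact Finset.mem_sdiff.mpr ⟨by
          rw [← hpv₃]; exact Finset.mem_biUnion.mpr ⟨t, Finset.mem_univ _, hve⟩, hvF⟩
  have hdA1 : Disjoint (F ∪ F') T₁ := by rw [hT₁def]; exact Finset.sdiff_disjoint.symm
  have hdA2 : Disjoint (F ∪ F') T₂ := by rw [hT₂def]; exact Finset.sdiff_disjoint.symm
  have hdA3 : Disjoint (F ∪ F') T₃ := by rw [hT₃def]; exact Finset.sdiff_disjoint.symm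
  have hdT12 : Disjoint T₁ T₂ := by
    rw [Finset.disjoint_left]
    intro v hv1 hv2
    rw [hT₁def] at hv1; rw [hT₂def] at hv2
    exact hdisj12 v (by rw [hpv₁]; exact (Finset.mem_sdiff.mp hv1).1)
      (by rw [hpv₂]; exact (Finset.mem_sdiff.mp hv2).1)
  have hdT13 : Disjoint T₁ T₃ := by
    rw [Finset.disjoint_left]
    intro v hv1 hv2
    rw [hT₁def] at hv1; rw [hT₃def] at hv2
    exact hdisj13 v (by rw [hpv₁]; exact (Finset.mem_sdiff.mp hv1).1)
      (by rw [hpv₃]; exact (Finset.mem_sdiff.mp hv2).1)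
  have hdT23 : Disjoint T₂ T₃ := by
    rw [Finset.disjoint_left]
    intro v hv1 hv2
    rw [hT₂def] at hv1; rw [hT₃def] at hv2
    exact hdisj23 v (by rw [hpv₂]; exact (Finset.mem_sdiff.mp hv1).1)
      (by rw [hpv₃]; exact (Finset.mem_sdiff.mp hv2).1)
  have hA6 : ∑ v ∈ F ∪ F', x v ^ 3 = 6 := by
    have hall : ∀ v ∈ F ∪ F', x v ^ 3 = 1 := fun v hv => by rw [hx1 v hv]; norm_num
    rw [Finset.sum_congr rfl hall, Finset.sum_const,
      Finset.card_union_of_disjoint hdisjFF', hcardF, hcardF']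
    norm_num
  have hDle : Dtot ≤ 6 +
      (((∑ j ∈ range n₁, thP σ (n₁+1) (j+1)^3) + ∑ j ∈ range (n₁+1), thQ σ (n₁+1) j ^3)
      + (((∑ j ∈ range n₂, thP σ (n₂+1) (j+1)^3) + ∑ j ∈ range (n₂+1), thQ σ (n₂+1) j ^3)
      + ((∑ j ∈ range n₃, thP σ (n₃+1) (j+1)^3) + ∑ j ∈ range (n₃+1), thQ σ (n₃+1) j ^3))) := by
    calc Dtot ≤ ∑ v ∈ (F ∪ F') ∪ (T₁ ∪ (T₂ ∪ T₃)), x v ^ 3 :=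
        Finset.sum_le_sum_of_subset_of_nonneg hVsub (fun v _ _ => pow_nonneg (hxnn v) 3)
      _ = (∑ v ∈ F ∪ F', x v ^ 3) + ((∑ v ∈ T₁, x v ^ 3)
          + ((∑ v ∈ T₂, x v ^ 3) + ∑ v ∈ T₃, x v ^ 3)) := by
          rw [Finset.sum_union (by
              refine Finset.disjoint_union_right.mpr ⟨hdA1, ?_⟩
              exact Finset.disjoint_union_right.mpr ⟨hdA2, hdA3⟩),
            Finset.sum_union (Finset.disjoint_union_right.mpr ⟨hdT12, hdT13⟩),
            Finset.sum_union hdT23]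
      _ ≤ _ := by
          rw [hA6]
          exact add_le_add_right (add_le_add hcube₁ (add_le_add hcube₂ hcube₃)) 6
  -- positivity of Dtot
  have hu0V : u 0 ∈ H.vertexSet := Finset.mem_biUnion.mpr ⟨F, hFe, huF 0⟩
  have hDpos : 0 < Dtot := by
    have h1 := Finset.single_le_sum (f := fun v => x v ^ 3)
      (fun v _ => pow_nonneg (hxnn v) 3) hu0V
    rw [hx1 (u 0) (Finset.mem_union_left _ (huF 0))] at h1
    norm_num at h1
    rw [hDtotdef]
    linarith
  -- scalar inequalities
  have hs₁ := path_scalar hσ1 hσ4 n₁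
  have hs₂ := path_scalar hσ1 hσ4 n₂
  have hs₃ := path_scalar hσ1 hσ4 n₃
  have hmain : σ^2 * Dtot < 3 * Ptot := by
    have e1 : σ^2 * Dtot ≤ σ^2 * (6 +
        (((∑ j ∈ range n₁, thP σ (n₁+1) (j+1)^3) + ∑ j ∈ range (n₁+1), thQ σ (n₁+1) j ^3)
        + (((∑ j ∈ range n₂, thP σ (n₂+1) (j+1)^3) + ∑ j ∈ range (n₂+1), thQ σ (n₂+1) j ^3)
        + ((∑ j ∈ range n₃, thP σ (n₃+1) (j+1)^3) + ∑ j ∈ range (n₃+1), thQ σ (n₃+1) j ^3)))) :=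
      mul_le_mul_of_nonneg_left hDle (by positivity)
    have e2 : σ^2 * (6 +
        (((∑ j ∈ range n₁, thP σ (n₁+1) (j+1)^3) + ∑ j ∈ range (n₁+1), thQ σ (n₁+1) j ^3)
        + (((∑ j ∈ range n₂, thP σ (n₂+1) (j+1)^3) + ∑ j ∈ range (n₂+1), thQ σ (n₂+1) j ^3)
        + ((∑ j ∈ range n₃, thP σ (n₃+1) (j+1)^3) + ∑ j ∈ range (n₃+1), thQ σ (n₃+1) j ^3))))
        = 6*σ^2
        + (σ^2 * ((∑ j ∈ range (n₁+1), thQ σ (n₁+1) j ^3) + ∑ j ∈ range n₁, thP σ (n₁+1) (j+1)^3)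
        + (σ^2 * ((∑ j ∈ range (n₂+1), thQ σ (n₂+1) j ^3) + ∑ j ∈ range n₂, thP σ (n₂+1) (j+1)^3)
        + σ^2 * ((∑ j ∈ range (n₃+1), thQ σ (n₃+1) j ^3) + ∑ j ∈ range n₃, thP σ (n₃+1) (j+1)^3))) := by
      ring
    rw [e2] at e1
    linarith [hs₁, hs₂, hs₃, hPge, e1]
  -- assemble
  have hmem : Ptot / Dtot ∈ {t : ℝ | ∃ y : V → ℝ, (∀ v, 0 ≤ y v) ∧
      (∃ v ∈ H.vertexSet, y v ≠ 0) ∧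
      t = (∑ e ∈ H.edges, ∏ v ∈ e, y v) / (∑ v ∈ H.vertexSet, y v ^ 3)} := by
    refine ⟨x, hxnn, ⟨u 0, hu0V, ?_⟩, rfl⟩
    rw [hx1 (u 0) (Finset.mem_union_left _ (huF 0))]
    exact one_ne_zero
  have hbdd : BddAbove {t : ℝ | ∃ y : V → ℝ, (∀ v, 0 ≤ y v) ∧
      (∃ v ∈ H.vertexSet, y v ≠ 0) ∧
      t = (∑ e ∈ H.edges, ∏ v ∈ e, y v) / (∑ v ∈ H.vertexSet, y v ^ 3)} := by
    refine ⟨(H.edges.card : ℝ)/3, ?_⟩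
    rintro t ⟨y, hy0, ⟨v₀, hv₀, hv₀ne⟩, rfl⟩
    have hDy : 0 < ∑ v ∈ H.vertexSet, y v ^ 3 := by
      have hv1 : 0 < y v₀ ^ 3 := pow_pos (lt_of_le_of_ne (hy0 v₀) (Ne.symm hv₀ne)) 3
      have hv2 := Finset.single_le_sum (f := fun v => y v ^ 3)
        (fun v _ => pow_nonneg (hy0 v) 3) hv₀
      linarith
    rw [div_le_div_iff₀ hDy (by norm_num : (0:ℝ) < 3)]
    have hedge : ∀ e ∈ H.edges, 3 * ∏ v ∈ e, y v ≤ ∑ v ∈ H.vertexSet, y v ^ 3 := by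
      intro e he
      obtain ⟨p, q, r, hpq, hpr, hqr, rfl⟩ := Finset.card_eq_three.mp (hunif e he)
      have hsub : ({p, q, r} : Finset V) ⊆ H.vertexSet :=
        fun v hv => Finset.mem_biUnion.mpr ⟨{p, q, r}, he, hv⟩
      have hprodpqr : ∏ v ∈ ({p, q, r} : Finset V), y v = y p * (y q * y r) := by
        rw [Finset.prod_insert (by simp [hpq, hpr]),
          Finset.prod_insert (by simp [hqr]), Finset.prod_singleton]
      have hsum3 : ∑ v ∈ ({p, q, r} : Finset V), y v ^ 3 = y p ^3 + (y q ^3 + y r ^3) := by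
        rw [Finset.sum_insert (by simp [hpq, hpr]),
          Finset.sum_insert (by simp [hqr]), Finset.sum_singleton]
      have hle3 : ∑ v ∈ ({p, q, r} : Finset V), y v ^ 3 ≤ ∑ v ∈ H.vertexSet, y v ^ 3 :=
        Finset.sum_le_sum_of_subset_of_nonneg hsub (fun v _ _ => pow_nonneg (hy0 v) 3)
      have hamgm := amgm3 (hy0 p) (hy0 q) (hy0 r)
      rw [hprodpqr]
      rw [hsum3] at hle3
      linarith
    calc (∑ e ∈ H.edges, ∏ v ∈ e, y v) * 3 = ∑ e ∈ H.edges, 3 * ∏ v ∈ e, y v := by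
          rw [Finset.sum_congr rfl (fun e _ => by ring : ∀ e ∈ H.edges,
            (3:ℝ) * ∏ v ∈ e, y v = 3 * ∏ v ∈ e, y v)]
          rw [← Finset.mul_sum]
          ring
      _ ≤ ∑ e ∈ H.edges, ∑ v ∈ H.vertexSet, y v ^ 3 := Finset.sum_le_sum hedge
      _ = (H.edges.card : ℝ) * ∑ v ∈ H.vertexSet, y v ^ 3 := by
          rw [Finset.sum_const, nsmul_eq_mul]
  have hle := le_csSup hbdd hmem
  have ht₀ : σ^2/3 < Ptot/Dtot := by
    rw [div_lt_div_iff₀ (by norm_num : (0:ℝ) < 3) hDpos]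
    linarith [hmain]
  rw [hconst]
  show 2*σ^2 < H.spectralRadius 3
  rw [EdgeHypergraph.spectralRadius]
  have hfact : (Nat.factorial 3 : ℝ) = 6 := by norm_num [Nat.factorial]
  rw [hfact]
  linarith [hle, ht₀]
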